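/- Let n ≥ 1. There exists C > 0 such that for all (x,y) ∈ N with x ≠ y, sup_{t>0} |T_t^𝒜(x,y) − W_t(x − y)| ≤ C (1 + |x|) / |x − y|^{n−1}. -/

import Mathlib

open MeasureTheory Real
open scoped ENNReal

/-- The local region `N = {(x,y) : |x-y| ≤ min(1, 1/|x|)}`. -/
def localN (n : ℕ) : Set (EuclideanSpace ℝ (Fin n) × EuclideanSpace ℝ (Fin n)) :=
  {p | ‖p.1 - p.2‖ ≤ 1 ∧ ‖p.1 - p.2‖ * ‖p.1‖ ≤ 1}

/-- The kernel `T_t^𝒜(x,y)` of the semigroup generated by `-𝒜`, where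
`𝒜 = -½Δ - x·∇` on `ℝⁿ`. -/
noncomputable def heatKerA (n : ℕ) (t : ℝ) (x y : EuclideanSpace ℝ (Fin n)) : ℝ :=
  Real.exp (-(n : ℝ) * t) * Real.pi ^ (-(n : ℝ) / 2) *
    (1 - Real.exp (-2 * t)) ^ (-(n : ℝ) / 2) *
    Real.exp (-‖x - Real.exp (-t) • y‖ ^ 2 / (1 - Real.exp (-2 * t)))

/-- The Euclidean heat kernel `W_t(z)` (for `-½Δ`). -/
noncomputable def heatKerW (n : ℕ) (t : ℝ) (z : EuclideanSpace ℝ (Fin n)) : ℝ :=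
  (2 * Real.pi * t) ^ (-(n : ℝ) / 2) * Real.exp (-‖z‖ ^ 2 / (2 * t))

namespace Stmt7Aux


lemma one_sub_exp_neg_le (u : ℝ) : 1 - Real.exp (-u) ≤ u := by
  nlinarith [Real.add_one_le_exp (-u)]

lemma exp_neg_le_quad {u : ℝ} (hu : 0 ≤ u) : Real.exp (-u) ≤ 1 - u + u ^ 2 := by
  have hprod : Real.exp (-u) * Real.exp u = 1 := by
    rw [← Real.exp_add]; simp
  have h1 := Real.add_one_le_exp u
  have h2 : (0:ℝ) < Real.exp u := Real.exp_pos u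
  nlinarith [sq_nonneg u, mul_le_mul_of_nonneg_left h1
    (show (0:ℝ) ≤ 1 - u + u ^ 2 by nlinarith [sq_nonneg (2*u-1)])]

lemma exp_sub_one_le (u : ℝ) : Real.exp u - 1 ≤ u * Real.exp u := by
  have hprod : Real.exp (-u) * Real.exp u = 1 := by
    rw [← Real.exp_add]; simp
  have h1 := Real.add_one_le_exp (-u)
  have h2 : (0:ℝ) < Real.exp u := Real.exp_pos u
  nlinarith

lemma abs_exp_sub_exp {u v E : ℝ} (hu : Real.exp (-u) ≤ E) (hv : Real.exp (-v) ≤ E) :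
    |Real.exp (-u) - Real.exp (-v)| ≤ E * |u - v| := by
  wlog h : v ≤ u generalizing u v
  · rw [abs_sub_comm, abs_sub_comm u v]; exact this hv hu (le_of_not_ge h)
  have h1 : Real.exp (-u) ≤ Real.exp (-v) := Real.exp_le_exp.mpr (by linarith)
  rw [abs_of_nonpos (by linarith), abs_of_nonneg (by linarith : 0 ≤ u - v), neg_sub]
  have key : Real.exp (-v) - Real.exp (-u) ≤ Real.exp (-v) * (u - v) := by
    have : Real.exp (-u) = Real.exp (-v) * Real.exp (-(u - v)) := by
      rw [← Real.exp_add]; ring_nf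
    rw [this]
    have h3 := one_sub_exp_neg_le (u - v)
    nlinarith [Real.exp_pos (-v)]
  calc Real.exp (-v) - Real.exp (-u) ≤ Real.exp (-v) * (u - v) := key
    _ ≤ E * (u - v) := by nlinarith [Real.exp_pos (-v)]

lemma pow_half_exp_le (n : ℕ) (hn : 1 ≤ n) {v : ℝ} (hv : 0 ≤ v) :
    v ^ ((n:ℝ)/2) * Real.exp (-v) ≤ (n:ℝ)^n + 1 := by
  have hnn : (0:ℝ) ≤ (n:ℝ)^n := by positivity
  rcases le_total v 1 with h | h
  · have h1 : v ^ ((n:ℝ)/2) ≤ 1 := Real.rpow_le_one hv h (by positivity)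
    have h2 : Real.exp (-v) ≤ 1 := Real.exp_le_one_iff.mpr (by linarith)
    nlinarith [Real.exp_pos (-v), Real.rpow_nonneg hv ((n:ℝ)/2)]
  · have hv1 : (1:ℝ) ≤ v := h
    have h1 : v ^ ((n:ℝ)/2) ≤ v ^ ((n:ℝ)) :=
      Real.rpow_le_rpow_of_exponent_le hv1 (by
        have : (1:ℝ) ≤ (n:ℝ) := by exact_mod_cast hn
        linarith)
    have h2 : v ^ ((n:ℝ)) = v ^ n := Real.rpow_natCast v n
    have h3 : v ^ n ≤ (n:ℝ)^n * Real.exp v := by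
      have hn0 : (0:ℝ) < n := by exact_mod_cast hn
      have key : v ≤ (n:ℝ) * Real.exp (v / n) := by
        have := Real.add_one_le_exp (v / n)
        have : v / n ≤ Real.exp (v / n) := by linarith
        calc v = (n:ℝ) * (v / n) := by field_simp
          _ ≤ (n:ℝ) * Real.exp (v / n) := by nlinarith
      calc v ^ n ≤ ((n:ℝ) * Real.exp (v / n)) ^ n :=
            pow_le_pow_left₀ hv key n
        _ = (n:ℝ)^n * (Real.exp (v / n)) ^ n := by rw [mul_pow]
        _ = (n:ℝ)^n * Real.exp v := by
            rw [← Real.exp_nat_mul]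
            congr 1
            field_simp
    have h4 : v ^ ((n:ℝ)/2) * Real.exp (-v) ≤ (n:ℝ)^n * Real.exp v * Real.exp (-v) := by
      have := Real.exp_pos (-v)
      nlinarith [Real.rpow_nonneg hv ((n:ℝ)/2)]
    have h5 : (n:ℝ)^n * Real.exp v * Real.exp (-v) = (n:ℝ)^n := by
      rw [mul_assoc, ← Real.exp_add]; simp
    nlinarith



lemma sq_rpow_half (n : ℕ) {r : ℝ} (hr : 0 ≤ r) : (r ^ 2) ^ ((n:ℝ)/2) = r ^ ((n:ℝ)) := by
  rw [← Real.rpow_natCast r 2, ← Real.rpow_mul hr]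
  push_cast
  rw [show (2:ℝ) * ((n:ℝ)/2) = (n:ℝ) by ring]

lemma four_rpow (n : ℕ) : (4:ℝ) ^ ((n:ℝ)/2) = 2 ^ n := by
  rw [show (4:ℝ) = 2 ^ (2:ℝ) by norm_num [← Real.rpow_natCast 2 2],
    ← Real.rpow_mul (by norm_num : (0:ℝ) ≤ 2)]
  rw [show (2:ℝ) * ((n:ℝ)/2) = (n:ℝ) by ring, Real.rpow_natCast]

lemma flip (n : ℕ) {r M : ℝ} (hr : 0 < r) (hM : 0 < M) :
    (r/(2*M)) ^ (-(n:ℝ)/2) = (2*M*r) ^ ((n:ℝ)/2) * (r ^ ((n:ℝ)))⁻¹ := by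
  have h1 : r/(2*M) = r^2/(2*M*r) := by field_simp
  have h2 : (0:ℝ) < 2*M*r := by positivity
  rw [h1, show -(n:ℝ)/2 = -((n:ℝ)/2) by ring,
    Real.rpow_neg (by positivity), ← Real.inv_rpow (by positivity),
    show (r^2/(2*M*r))⁻¹ = (2*M*r)/r^2 by field_simp,
    Real.div_rpow h2.le (by positivity), sq_rpow_half n hr.le, div_eq_mul_inv]

lemma t_exp_bound (n : ℕ) (hn : 1 ≤ n) {t r : ℝ} (ht : 0 < t) (hr : 0 < r) :
    t ^ (-(n:ℝ)/2) * Real.exp (-(r^2/(8*t))) ≤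
      8 ^ ((n:ℝ)/2) * ((n:ℝ)^n+1) * (r ^ ((n:ℝ)))⁻¹ := by
  set v : ℝ := r^2/(8*t) with hv
  have hv0 : 0 < v := by positivity
  have htv : t = r^2/(8*v) := by rw [hv]; field_simp
  have key : t ^ (-(n:ℝ)/2) = 8 ^ ((n:ℝ)/2) * v ^ ((n:ℝ)/2) * (r ^ ((n:ℝ)))⁻¹ := by
    rw [htv, show -(n:ℝ)/2 = -((n:ℝ)/2) by ring,
      Real.rpow_neg (by positivity), ← Real.inv_rpow (by positivity),
      show (r^2/(8*v))⁻¹ = (8*v)/r^2 by field_simp,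
      Real.div_rpow (by positivity) (by positivity),
      Real.mul_rpow (by norm_num) hv0.le, sq_rpow_half n hr.le, div_eq_mul_inv]
  rw [key]
  have hb := pow_half_exp_le n hn hv0.le
  have h8 : (0:ℝ) < 8 ^ ((n:ℝ)/2) := by positivity
  have hrn : (0:ℝ) < (r ^ ((n:ℝ)))⁻¹ := by positivity
  calc 8 ^ ((n:ℝ)/2) * v ^ ((n:ℝ)/2) * (r ^ ((n:ℝ)))⁻¹ * Real.exp (-v)
      = 8 ^ ((n:ℝ)/2) * (v ^ ((n:ℝ)/2) * Real.exp (-v)) * (r ^ ((n:ℝ)))⁻¹ := by ring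
    _ ≤ 8 ^ ((n:ℝ)/2) * ((n:ℝ)^n+1) * (r ^ ((n:ℝ)))⁻¹ := by
        apply mul_le_mul_of_nonneg_right _ hrn.le
        exact mul_le_mul_of_nonneg_left hb h8.le





noncomputable def K2 (n : ℕ) : ℝ := 8 ^ ((n:ℝ)/2) * ((n:ℝ)^n+1) + 2 ^ n
noncomputable def K3 (n : ℕ) : ℝ := 8 ^ ((n:ℝ)/2) * ((n:ℝ)^n+1) + 2 ^ n + 2 ^ n

lemma rp1n {n : ℕ} {r : ℝ} (hr : 0 < r) :
    r ^ (1-(n:ℝ)) = r * (r ^ ((n:ℝ)))⁻¹ := by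
  rw [show (1-(n:ℝ)) = 1 + (-(n:ℝ)) by ring, Real.rpow_add hr, Real.rpow_one,
    Real.rpow_neg hr.le]

lemma twoMr_le {n : ℕ} {M r : ℝ} (hM : 0 < M) (hr : 0 < r) (hMr : M*r ≤ 2) :
    (2*M*r) ^ ((n:ℝ)/2) ≤ 2 ^ n := by
  calc (2*M*r) ^ ((n:ℝ)/2) ≤ (4:ℝ) ^ ((n:ℝ)/2) :=
        Real.rpow_le_rpow (by positivity) (by nlinarith) (by positivity)
    _ = 2 ^ n := four_rpow n

lemma caseA_exp {M r t : ℝ} (hr : 0 < r) (hM : 0 < M) (ht : 0 < t) (h : 2*t*M ≤ r) :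
    Real.exp (-(max (r - t*M) 0)^2/(2*t)) ≤ Real.exp (-(r^2/(8*t))) := by
  have hm : r/2 ≤ r - t*M := by nlinarith
  have hm0 : (0:ℝ) ≤ r - t*M := by nlinarith
  rw [max_eq_left hm0]
  apply Real.exp_le_exp.mpr
  have hsq : r^2/4 ≤ (r - t*M)^2 := by nlinarith
  have key : r^2/(8*t) ≤ (r - t*M)^2/(2*t) := by
    rw [div_le_div_iff₀ (by positivity) (by positivity)]
    nlinarith
  have e1 : -(r - t*M)^2/(2*t) = -((r - t*M)^2/(2*t)) := by ring
  have e2 : (-(r^2/(8*t)) : ℝ) = -(r^2/(8*t)) := rfl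
  rw [e1]
  linarith

lemma bound_ii (n : ℕ) (hn : 1 ≤ n) {r M t : ℝ} (hr : 0 < r) (hr1 : r ≤ 1)
    (hM : 1 ≤ M) (hMr : M*r ≤ 2) (ht : 0 < t) :
    t ^ (-(n:ℝ)/2) * Real.exp (-(max (r - t*M) 0)^2/(2*t)) * (M*r)
      ≤ K2 n * (M * r ^ (1-(n:ℝ))) := by
  have hM0 : (0:ℝ) < M := by linarith
  have hE1 : Real.exp (-(max (r - t*M) 0)^2/(2*t)) ≤ 1 := by
    apply Real.exp_le_one_iff.mpr
    have h0 : (0:ℝ) ≤ (max (r - t*M) 0)^2/(2*t) := by positivity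
    have e1 : -(max (r - t*M) 0)^2/(2*t) = -((max (r - t*M) 0)^2/(2*t)) := by ring
    rw [e1]; linarith
  have hrn : (0:ℝ) < (r ^ ((n:ℝ)))⁻¹ := by positivity
  have hrp : r ^ (1-(n:ℝ)) = r * (r ^ ((n:ℝ)))⁻¹ := rp1n hr
  rcases le_total (2*t*M) r with h | h
  · have h1 : t ^ (-(n:ℝ)/2) * Real.exp (-(max (r - t*M) 0)^2/(2*t))
        ≤ 8 ^ ((n:ℝ)/2) * ((n:ℝ)^n+1) * (r ^ ((n:ℝ)))⁻¹ := by
      calc t ^ (-(n:ℝ)/2) * Real.exp (-(max (r - t*M) 0)^2/(2*t))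
          ≤ t ^ (-(n:ℝ)/2) * Real.exp (-(r^2/(8*t))) := by
            have h2 := caseA_exp hr hM0 ht h
            have hp : (0:ℝ) ≤ t ^ (-(n:ℝ)/2) := by positivity
            nlinarith
        _ ≤ 8 ^ ((n:ℝ)/2) * ((n:ℝ)^n+1) * (r ^ ((n:ℝ)))⁻¹ := t_exp_bound n hn ht hr
    calc t ^ (-(n:ℝ)/2) * Real.exp (-(max (r - t*M) 0)^2/(2*t)) * (M*r)
        ≤ (8 ^ ((n:ℝ)/2) * ((n:ℝ)^n+1) * (r ^ ((n:ℝ)))⁻¹) * (M*r) := by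
          apply mul_le_mul_of_nonneg_right h1 (by positivity)
      _ = (8 ^ ((n:ℝ)/2) * ((n:ℝ)^n+1)) * (M * (r * (r ^ ((n:ℝ)))⁻¹)) := by ring
      _ ≤ K2 n * (M * r ^ (1-(n:ℝ))) := by
          rw [hrp, K2]
          have h2 : (0:ℝ) ≤ M * (r * (r ^ ((n:ℝ)))⁻¹) := by positivity
          nlinarith [pow_pos (show (0:ℝ) < 2 by norm_num) n]
  · have hdiv : r/(2*M) ≤ t := by rw [div_le_iff₀ (by positivity)]; nlinarith
    have hneg : (-(n:ℝ)/2 : ℝ) ≤ 0 := by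
      have h9 : (0:ℝ) ≤ (n:ℝ)/2 := by positivity
      linarith
    have htc : t ^ (-(n:ℝ)/2) ≤ (r/(2*M)) ^ (-(n:ℝ)/2) :=
      Real.rpow_le_rpow_of_nonpos (by positivity) hdiv hneg
    have hfl : (r/(2*M)) ^ (-(n:ℝ)/2) = (2*M*r) ^ ((n:ℝ)/2) * (r ^ ((n:ℝ)))⁻¹ :=
      flip n hr hM0
    calc t ^ (-(n:ℝ)/2) * Real.exp (-(max (r - t*M) 0)^2/(2*t)) * (M*r)
        ≤ (r/(2*M)) ^ (-(n:ℝ)/2) * 1 * (M*r) := by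
          apply mul_le_mul_of_nonneg_right _ (by positivity : (0:ℝ) ≤ M*r)
          exact mul_le_mul htc hE1 (Real.exp_pos _).le (by positivity)
      _ = (2*M*r) ^ ((n:ℝ)/2) * (r ^ ((n:ℝ)))⁻¹ * (M*r) := by
          rw [mul_one, hfl]
      _ ≤ 2 ^ n * (r ^ ((n:ℝ)))⁻¹ * (M*r) := by
          apply mul_le_mul_of_nonneg_right (mul_le_mul_of_nonneg_right
            (twoMr_le hM0 hr hMr) hrn.le) (by positivity)
      _ = 2 ^ n * (M * (r * (r ^ ((n:ℝ)))⁻¹)) := by ring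
      _ ≤ K2 n * (M * r ^ (1-(n:ℝ))) := by
          rw [hrp, K2]
          have h2 : (0:ℝ) ≤ M * (r * (r ^ ((n:ℝ)))⁻¹) := by positivity
          have h3 : (0:ℝ) ≤ 8 ^ ((n:ℝ)/2) * ((n:ℝ)^n+1) := by positivity
          nlinarith [mul_nonneg h3 h2]

lemma Mn_le (n : ℕ) (hn : 1 ≤ n) {r M : ℝ} (hr : 0 < r) (hM : 1 ≤ M) (hMr : M*r ≤ 2) :
    M ^ ((n:ℝ)) ≤ 2 ^ n * (M * r ^ (1-(n:ℝ))) := by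
  have hM0 : (0:ℝ) < M := by linarith
  have hn1 : (1:ℝ) ≤ (n:ℝ) := by exact_mod_cast hn
  have eMn : M ^ ((n:ℝ)) = M * M ^ ((n:ℝ)-1) := by
    have h := Real.rpow_add hM0 1 ((n:ℝ)-1)
    rw [Real.rpow_one, show (1:ℝ) + ((n:ℝ)-1) = (n:ℝ) from by ring] at h
    exact h
  have hM2r : M ≤ 2/r := by rw [le_div_iff₀ hr]; linarith
  have h5 : M ^ ((n:ℝ)-1) ≤ (2/r) ^ ((n:ℝ)-1) :=
    Real.rpow_le_rpow hM0.le hM2r (by linarith)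
  have h6 : (2/r) ^ ((n:ℝ)-1) = 2 ^ ((n:ℝ)-1) * r ^ (1-(n:ℝ)) := by
    rw [Real.div_rpow (by norm_num) hr.le, div_eq_mul_inv, ← Real.rpow_neg hr.le,
      show -((n:ℝ)-1) = 1-(n:ℝ) by ring]
  have h7 : (2:ℝ) ^ ((n:ℝ)-1) ≤ 2 ^ ((n:ℝ)) :=
    Real.rpow_le_rpow_of_exponent_le one_le_two (by linarith)
  have h8 : (2:ℝ) ^ ((n:ℝ)) = 2 ^ n := Real.rpow_natCast 2 n
  have hr1n : (0:ℝ) < r ^ (1-(n:ℝ)) := Real.rpow_pos_of_pos hr _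
  calc M ^ ((n:ℝ)) = M * M ^ ((n:ℝ)-1) := eMn
    _ ≤ M * (2 ^ ((n:ℝ)-1) * r ^ (1-(n:ℝ))) := by
        apply mul_le_mul_of_nonneg_left _ hM0.le
        rw [← h6]; exact h5
    _ ≤ M * (2 ^ ((n:ℝ)) * r ^ (1-(n:ℝ))) := by
        apply mul_le_mul_of_nonneg_left _ hM0.le
        exact mul_le_mul_of_nonneg_right h7 hr1n.le
    _ = 2 ^ ((n:ℝ)) * (M * r ^ (1-(n:ℝ))) := by ring
    _ = 2 ^ n * (M * r ^ (1-(n:ℝ))) := by rw [h8]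

set_option maxHeartbeats 1000000 in
lemma bound_iii (n : ℕ) (hn : 1 ≤ n) {r M t : ℝ} (hr : 0 < r) (hr1 : r ≤ 1)
    (hM : 1 ≤ M) (hMr : M*r ≤ 2) (ht : 0 < t) (htM : t*M^2 ≤ 1) :
    t ^ (-(n:ℝ)/2) * Real.exp (-(max (r - t*M) 0)^2/(2*t)) * (t*M^2)
      ≤ K3 n * (M * r ^ (1-(n:ℝ))) := by
  have hM0 : (0:ℝ) < M := by linarith
  have hrpos : (0:ℝ) < M * r ^ (1-(n:ℝ)) := by positivity
  have h2n : (0:ℝ) < (2:ℝ) ^ n := by positivity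
  have hK23 : K2 n + 2^n = K3 n := by rw [K2, K3]
  have hE1 : Real.exp (-(max (r - t*M) 0)^2/(2*t)) ≤ 1 := by
    apply Real.exp_le_one_iff.mpr
    have h0 : (0:ℝ) ≤ (max (r - t*M) 0)^2/(2*t) := by positivity
    have e1 : -(max (r - t*M) 0)^2/(2*t) = -((max (r - t*M) 0)^2/(2*t)) := by ring
    rw [e1]; linarith
  have hrn : (0:ℝ) < (r ^ ((n:ℝ)))⁻¹ := by positivity
  have hrp : r ^ (1-(n:ℝ)) = r * (r ^ ((n:ℝ)))⁻¹ := rp1n hr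
  rcases le_total (2*t*M) r with h | h
  · have h1 : t*M^2 ≤ M*r := by nlinarith
    calc t ^ (-(n:ℝ)/2) * Real.exp (-(max (r - t*M) 0)^2/(2*t)) * (t*M^2)
        ≤ t ^ (-(n:ℝ)/2) * Real.exp (-(max (r - t*M) 0)^2/(2*t)) * (M*r) := by
          apply mul_le_mul_of_nonneg_left h1 (by positivity)
      _ ≤ K2 n * (M * r ^ (1-(n:ℝ))) := bound_ii n hn hr hr1 hM hMr ht
      _ ≤ K3 n * (M * r ^ (1-(n:ℝ))) := by
          rw [← hK23]
          nlinarith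
  · have hdiv : r/(2*M) ≤ t := by rw [div_le_iff₀ (by positivity)]; nlinarith
    have hpow : t ^ (1-(n:ℝ)/2) = t ^ (-(n:ℝ)/2) * t := by
      rw [show (1-(n:ℝ)/2) = (-(n:ℝ)/2) + 1 by ring, Real.rpow_add ht, Real.rpow_one]
    have step1 : t ^ (-(n:ℝ)/2) * Real.exp (-(max (r - t*M) 0)^2/(2*t)) * (t*M^2)
        ≤ t ^ (1-(n:ℝ)/2) * M^2 := by
      rw [hpow]
      have hp : (0:ℝ) ≤ t ^ (-(n:ℝ)/2) := by positivity
      have hq : (0:ℝ) ≤ t*M^2 := by positivity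
      nlinarith [mul_le_mul_of_nonneg_right (mul_le_mul_of_nonneg_left hE1 hp) hq]
    rcases le_total ((n:ℝ)/2) 1 with hc | hc
    · have hti : t ≤ (M^2)⁻¹ := by
        rw [inv_eq_one_div, le_div_iff₀ (by positivity)]
        linarith
      have step2 : t ^ (1-(n:ℝ)/2) ≤ ((M^2)⁻¹ : ℝ) ^ (1-(n:ℝ)/2) :=
        Real.rpow_le_rpow ht.le hti (by linarith)
      have e1 : ((M^2)⁻¹ : ℝ) ^ (1-(n:ℝ)/2) = M ^ ((n:ℝ)-2) := by
        rw [← Real.rpow_natCast M 2, ← Real.rpow_neg hM0.le,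
          ← Real.rpow_mul hM0.le]
        congr 1
        push_cast
        ring
      have e2 : M ^ ((n:ℝ)-2) * M^2 = M ^ ((n:ℝ)) := by
        rw [← Real.rpow_natCast M 2, ← Real.rpow_add hM0]
        norm_num
      calc t ^ (-(n:ℝ)/2) * Real.exp (-(max (r - t*M) 0)^2/(2*t)) * (t*M^2)
          ≤ t ^ (1-(n:ℝ)/2) * M^2 := step1
        _ ≤ ((M^2)⁻¹ : ℝ) ^ (1-(n:ℝ)/2) * M^2 := by
            apply mul_le_mul_of_nonneg_right step2 (by positivity)
        _ = M ^ ((n:ℝ)) := by rw [e1, e2]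
        _ ≤ 2 ^ n * (M * r ^ (1-(n:ℝ))) := Mn_le n hn hr hM hMr
        _ ≤ K3 n * (M * r ^ (1-(n:ℝ))) := by
            rw [K3]
            have h3 : (0:ℝ) ≤ 8 ^ ((n:ℝ)/2) * ((n:ℝ)^n+1) := by positivity
            nlinarith [mul_nonneg h3 hrpos.le]
    · have step2 : t ^ (1-(n:ℝ)/2) ≤ (r/(2*M)) ^ (1-(n:ℝ)/2) :=
        Real.rpow_le_rpow_of_nonpos (by positivity) hdiv (by linarith)
      have e1 : (r/(2*M)) ^ (1-(n:ℝ)/2) =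
          (r/(2*M)) * ((2*M*r) ^ ((n:ℝ)/2) * (r ^ ((n:ℝ)))⁻¹) := by
        rw [show (1-(n:ℝ)/2) = 1 + (-(n:ℝ)/2) by ring, Real.rpow_add (by positivity),
          Real.rpow_one, flip n hr hM0]
      have h2Mr : (2*M*r) ^ ((n:ℝ)/2) ≤ 2 ^ n := twoMr_le hM0 hr hMr
      have h2Mr0 : (0:ℝ) ≤ (2*M*r) ^ ((n:ℝ)/2) := by positivity
      calc t ^ (-(n:ℝ)/2) * Real.exp (-(max (r - t*M) 0)^2/(2*t)) * (t*M^2)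
          ≤ t ^ (1-(n:ℝ)/2) * M^2 := step1
        _ ≤ (r/(2*M)) ^ (1-(n:ℝ)/2) * M^2 := by
            apply mul_le_mul_of_nonneg_right step2 (by positivity)
        _ = (M*r/2) * ((2*M*r) ^ ((n:ℝ)/2) * (r ^ ((n:ℝ)))⁻¹) := by
            rw [e1]; field_simp
        _ ≤ (M*r) * (2 ^ n * (r ^ ((n:ℝ)))⁻¹) := by
            have hle : (2*M*r) ^ ((n:ℝ)/2) * (r ^ ((n:ℝ)))⁻¹ ≤ 2 ^ n * (r ^ ((n:ℝ)))⁻¹ :=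
              mul_le_mul_of_nonneg_right h2Mr hrn.le
            have hle2 : M*r/2 ≤ M*r := by nlinarith
            exact mul_le_mul hle2 hle (mul_nonneg h2Mr0 hrn.le) (by positivity)
        _ = 2 ^ n * (M * (r * (r ^ ((n:ℝ)))⁻¹)) := by ring
        _ ≤ K3 n * (M * r ^ (1-(n:ℝ))) := by
            rw [hrp, K3]
            have h2 : (0:ℝ) ≤ M * (r * (r ^ ((n:ℝ)))⁻¹) := by positivity
            have h3 : (0:ℝ) ≤ 8 ^ ((n:ℝ)/2) * ((n:ℝ)^n+1) := by positivity
            nlinarith [mul_nonneg h3 h2, mul_nonneg h2n.le h2]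




noncomputable def K1 (n : ℕ) : ℝ := (n:ℝ) + 2*(n:ℝ)*Real.exp ((n:ℝ)/2) + 1

set_option maxHeartbeats 1600000 in
lemma core (n : ℕ) (hn : 1 ≤ n) {r M t a : ℝ}
    (hr : 0 < r) (hr1 : r ≤ 1) (hM : 1 ≤ M) (hMr : M*r ≤ 2)
    (ht : 0 < t) (ht4 : t ≤ 1/4) (htM : t*M^2 ≤ 1)
    (ha0 : 0 ≤ a) (ha1 : a ≤ r + t*M) (ha2 : r - t*M ≤ a) :
    |Real.exp (-(n:ℝ)*t) * Real.pi ^ (-(n:ℝ)/2) * (1 - Real.exp (-2*t)) ^ (-(n:ℝ)/2) *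
        Real.exp (-a^2/(1 - Real.exp (-2*t))) -
      (2*Real.pi*t) ^ (-(n:ℝ)/2) * Real.exp (-r^2/(2*t))|
    ≤ (K1 n * K3 n + 4 * K2 n) * (M * r ^ (1-(n:ℝ))) := by
  have hM0 : (0:ℝ) < M := by linarith
  have hn1 : (1:ℝ) ≤ (n:ℝ) := by exact_mod_cast hn
  have hneg : (-(n:ℝ)/2 : ℝ) ≤ 0 := by
    have : (0:ℝ) ≤ (n:ℝ)/2 := by positivity
    linarith
  set s : ℝ := 1 - Real.exp (-2*t) with hs_def
  have he2 : (-2*t : ℝ) = -(2*t) := by ring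
  have hs1 : s ≤ 2*t := by
    have := one_sub_exp_neg_le (2*t)
    rw [hs_def, he2]; linarith
  have hs2 : 2*t - 4*t^2 ≤ s := by
    have h := exp_neg_le_quad (by linarith : (0:ℝ) ≤ 2*t)
    rw [hs_def, he2]; nlinarith
  have hst : t ≤ s := by nlinarith
  have hs0 : (0:ℝ) < s := lt_of_lt_of_le ht hst
  set P : ℝ := t ^ (-(n:ℝ)/2) with hP_def
  set E : ℝ := Real.exp (-(max (r - t*M) 0)^2/(2*t)) with hE_def
  have hP0 : (0:ℝ) < P := Real.rpow_pos_of_pos ht _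
  have hE0 : (0:ℝ) < E := Real.exp_pos _
  have hpi1 : Real.pi ^ (-(n:ℝ)/2) ≤ 1 :=
    Real.rpow_le_one_of_one_le_of_nonpos (by linarith [Real.pi_gt_three]) hneg
  have hpi0 : (0:ℝ) < Real.pi ^ (-(n:ℝ)/2) := Real.rpow_pos_of_pos Real.pi_pos _
  have hsP : s ^ (-(n:ℝ)/2) ≤ P := Real.rpow_le_rpow_of_nonpos ht hst hneg
  have hsc0 : (0:ℝ) < s ^ (-(n:ℝ)/2) := Real.rpow_pos_of_pos hs0 _
  have h2tP : (2*t) ^ (-(n:ℝ)/2) ≤ P :=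
    Real.rpow_le_rpow_of_nonpos ht (by linarith) hneg
  have h2tc0 : (0:ℝ) < (2*t) ^ (-(n:ℝ)/2) := Real.rpow_pos_of_pos (by linarith) _
  have hm0 : (0:ℝ) ≤ max (r - t*M) 0 := le_max_right _ _
  have hma : max (r - t*M) 0 ≤ a := max_le ha2 ha0
  have hmr : max (r - t*M) 0 ≤ r := max_le (by nlinarith) hr.le
  have hEa : Real.exp (-a^2/s) ≤ E := by
    rw [hE_def, neg_div, neg_div]
    apply Real.exp_le_exp.mpr
    apply neg_le_neg
    gcongr <;> assumption
  have hEr : Real.exp (-r^2/(2*t)) ≤ E := by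
    rw [hE_def, neg_div, neg_div]
    apply Real.exp_le_exp.mpr
    apply neg_le_neg
    gcongr
  have hea0 : (0:ℝ) < Real.exp (-a^2/s) := Real.exp_pos _
  have hea1 : Real.exp (-a^2/s) ≤ 1 := by
    apply Real.exp_le_one_iff.mpr
    rw [neg_div]
    have : (0:ℝ) ≤ a^2/s := by positivity
    linarith
  -- D1 : first factor
  have hD1 : |Real.exp (-(n:ℝ)*t) - 1| ≤ (n:ℝ)*t := by
    have h0 : Real.exp (-(n:ℝ)*t) ≤ 1 := by
      apply Real.exp_le_one_iff.mpr
      nlinarith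
    rw [abs_of_nonpos (by linarith)]
    have := one_sub_exp_neg_le ((n:ℝ)*t)
    rw [show (-((n:ℝ)*t) : ℝ) = -(n:ℝ)*t from by ring] at this
    linarith
  -- D2 : difference of rpow factors
  have hkey : s ^ (-(n:ℝ)/2) = (2*t) ^ (-(n:ℝ)/2) * ((2*t)/s) ^ ((n:ℝ)/2) := by
    rw [Real.div_rpow (by linarith) hs0.le,
      show (-(n:ℝ)/2 : ℝ) = -((n:ℝ)/2) from by ring,
      Real.rpow_neg (by linarith : (0:ℝ) ≤ 2*t), Real.rpow_neg hs0.le]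
    field_simp
  have hq2 : (2*t)/s ≤ 1+4*t := by
    rw [div_le_iff₀ hs0]
    nlinarith
  have hq3 : ((2*t)/s) ^ ((n:ℝ)/2) ≤ Real.exp (2*(n:ℝ)*t) := by
    calc ((2*t)/s) ^ ((n:ℝ)/2) ≤ (Real.exp (4*t)) ^ ((n:ℝ)/2) := by
          apply Real.rpow_le_rpow (by positivity) _ (by positivity)
          calc (2*t)/s ≤ 1+4*t := hq2
            _ ≤ Real.exp (4*t) := by linarith [Real.add_one_le_exp (4*t)]
      _ = Real.exp (4*t*((n:ℝ)/2)) := by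
          rw [Real.rpow_def_of_pos (Real.exp_pos _), Real.log_exp]
      _ = Real.exp (2*(n:ℝ)*t) := by ring_nf
  have hone : (1:ℝ) ≤ ((2*t)/s) ^ ((n:ℝ)/2) :=
    Real.one_le_rpow (by rw [le_div_iff₀ hs0]; linarith) (by positivity)
  have hq4 : Real.exp (2*(n:ℝ)*t) - 1 ≤ 2*(n:ℝ)*t * Real.exp ((n:ℝ)/2) := by
    have h1 := exp_sub_one_le (2*(n:ℝ)*t)
    have h2 : Real.exp (2*(n:ℝ)*t) ≤ Real.exp ((n:ℝ)/2) := by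
      apply Real.exp_le_exp.mpr
      nlinarith
    nlinarith [Real.exp_pos (2*(n:ℝ)*t)]
  have hD2 : s ^ (-(n:ℝ)/2) - (2*t) ^ (-(n:ℝ)/2) ≤ P * (2*(n:ℝ)*Real.exp ((n:ℝ)/2)*t) := by
    have heq : s ^ (-(n:ℝ)/2) - (2*t) ^ (-(n:ℝ)/2)
        = (2*t) ^ (-(n:ℝ)/2) * (((2*t)/s) ^ ((n:ℝ)/2) - 1) := by
      rw [hkey]; ring
    rw [heq]
    calc (2*t) ^ (-(n:ℝ)/2) * (((2*t)/s) ^ ((n:ℝ)/2) - 1)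
        ≤ P * (Real.exp (2*(n:ℝ)*t) - 1) := by
          apply mul_le_mul h2tP (by linarith) (by linarith) hP0.le
      _ ≤ P * (2*(n:ℝ)*t * Real.exp ((n:ℝ)/2)) := by
          apply mul_le_mul_of_nonneg_left _ hP0.le
          linarith
      _ = P * (2*(n:ℝ)*Real.exp ((n:ℝ)/2)*t) := by ring
  -- D3 : difference of exponentials
  have habs : |a^2/s - r^2/(2*t)| ≤ 2*M*r + t*M^2 + 2*r^2 := by
    have hsplit : a^2/s - r^2/(2*t) = (a^2-r^2)/s + r^2*(2*t-s)/(s*(2*t)) := by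
      field_simp
      ring
    have hb1 : |(a^2-r^2)/s| ≤ 2*M*r + t*M^2 := by
      have h1 : |a^2-r^2| ≤ t*M*(2*r+t*M) := by
        have e1 : a^2-r^2 = (a-r)*(a+r) := by ring
        have h2 : |a-r| ≤ t*M := abs_le.mpr ⟨by linarith, by linarith⟩
        have h3 : |a+r| ≤ 2*r+t*M := by
          rw [abs_of_nonneg (by linarith)]
          linarith
        rw [e1, abs_mul]
        calc |a - r| * |a + r| ≤ (t*M)*(2*r+t*M) :=
              mul_le_mul h2 h3 (abs_nonneg _) (by positivity)
          _ = t*M*(2*r+t*M) := by ring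
      rw [abs_div, abs_of_pos hs0]
      calc |a^2-r^2|/s ≤ (t*M*(2*r+t*M))/s := by gcongr
        _ ≤ (t*M*(2*r+t*M))/t := by gcongr
        _ = 2*M*r + t*M^2 := by field_simp
    have hb2 : r^2*(2*t-s)/(s*(2*t)) ≤ 2*r^2 := by
      have h1 : 2*t-s ≤ 4*t^2 := by linarith
      have h2 : (0:ℝ) ≤ 2*t-s := by linarith
      calc r^2*(2*t-s)/(s*(2*t)) ≤ r^2*(4*t^2)/(s*(2*t)) := by gcongr
        _ ≤ r^2*(4*t^2)/(t*(2*t)) := by gcongr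
        _ = 2*r^2 := by field_simp; ring
    have hb2' : (0:ℝ) ≤ r^2*(2*t-s)/(s*(2*t)) := by
      have h2 : (0:ℝ) ≤ 2*t-s := by linarith
      positivity
    calc |a^2/s - r^2/(2*t)| = |(a^2-r^2)/s + r^2*(2*t-s)/(s*(2*t))| := by rw [hsplit]
      _ ≤ |(a^2-r^2)/s| + |r^2*(2*t-s)/(s*(2*t))| := abs_add_le _ _
      _ = |(a^2-r^2)/s| + r^2*(2*t-s)/(s*(2*t)) := by rw [abs_of_nonneg hb2']
      _ ≤ (2*M*r + t*M^2) + 2*r^2 := by linarith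
      _ = 2*M*r + t*M^2 + 2*r^2 := by ring
  have hD3 : |Real.exp (-a^2/s) - Real.exp (-r^2/(2*t))| ≤ E * (2*M*r + t*M^2 + 2*r^2) := by
    have h1 : |Real.exp (-(a^2/s)) - Real.exp (-(r^2/(2*t)))|
        ≤ E * |a^2/s - r^2/(2*t)| := by
      apply abs_exp_sub_exp
      · rw [← neg_div]; exact hEa
      · rw [← neg_div]; exact hEr
    rw [neg_div, neg_div]
    calc |Real.exp (-(a^2/s)) - Real.exp (-(r^2/(2*t)))| ≤ E * |a^2/s - r^2/(2*t)| := h1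
      _ ≤ E * (2*M*r + t*M^2 + 2*r^2) := by
          apply mul_le_mul_of_nonneg_left habs hE0.le
  -- decomposition
  have hWsplit : (2*Real.pi*t) ^ (-(n:ℝ)/2)
      = Real.pi ^ (-(n:ℝ)/2) * (2*t) ^ (-(n:ℝ)/2) := by
    rw [show (2*Real.pi*t : ℝ) = Real.pi*(2*t) from by ring,
      Real.mul_rpow Real.pi_pos.le (by linarith)]
  have hsplitTW : Real.exp (-(n:ℝ)*t) * Real.pi ^ (-(n:ℝ)/2) * s ^ (-(n:ℝ)/2) *
        Real.exp (-a^2/s) - (2*Real.pi*t) ^ (-(n:ℝ)/2) * Real.exp (-r^2/(2*t))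
      = (Real.exp (-(n:ℝ)*t) - 1) * (Real.pi ^ (-(n:ℝ)/2) * s ^ (-(n:ℝ)/2) *
          Real.exp (-a^2/s))
        + (Real.pi ^ (-(n:ℝ)/2) * (s ^ (-(n:ℝ)/2) - (2*t) ^ (-(n:ℝ)/2))) *
            Real.exp (-a^2/s)
        + (Real.pi ^ (-(n:ℝ)/2) * (2*t) ^ (-(n:ℝ)/2)) *
            (Real.exp (-a^2/s) - Real.exp (-r^2/(2*t))) := by
    rw [hWsplit]; ring
  have hT1 : |(Real.exp (-(n:ℝ)*t) - 1) * (Real.pi ^ (-(n:ℝ)/2) * s ^ (-(n:ℝ)/2) *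
      Real.exp (-a^2/s))| ≤ ((n:ℝ)*t) * (P * E) := by
    rw [abs_mul]
    apply mul_le_mul hD1 _ (abs_nonneg _) (by positivity)
    rw [abs_of_nonneg (by positivity)]
    calc Real.pi ^ (-(n:ℝ)/2) * s ^ (-(n:ℝ)/2) * Real.exp (-a^2/s)
        ≤ 1 * P * E := by
          apply mul_le_mul (mul_le_mul hpi1 hsP hsc0.le (by norm_num)) hEa hea0.le
            (by positivity)
      _ = P * E := by ring
  have hT2 : |(Real.pi ^ (-(n:ℝ)/2) * (s ^ (-(n:ℝ)/2) - (2*t) ^ (-(n:ℝ)/2))) *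
      Real.exp (-a^2/s)| ≤ (2*(n:ℝ)*Real.exp ((n:ℝ)/2)*t) * (P * E) := by
    rw [abs_mul, abs_mul]
    have hd0 : (0:ℝ) ≤ s ^ (-(n:ℝ)/2) - (2*t) ^ (-(n:ℝ)/2) := by
      have : (2*t) ^ (-(n:ℝ)/2) ≤ s ^ (-(n:ℝ)/2) :=
        Real.rpow_le_rpow_of_nonpos hs0 hs1 hneg
      linarith
    rw [abs_of_nonneg hd0, abs_of_pos hpi0, abs_of_pos hea0]
    calc Real.pi ^ (-(n:ℝ)/2) * (s ^ (-(n:ℝ)/2) - (2*t) ^ (-(n:ℝ)/2)) * Real.exp (-a^2/s)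
        ≤ 1 * (P * (2*(n:ℝ)*Real.exp ((n:ℝ)/2)*t)) * E := by
          apply mul_le_mul (mul_le_mul hpi1 hD2 hd0 (by norm_num)) hEa hea0.le
            (by positivity)
      _ = (2*(n:ℝ)*Real.exp ((n:ℝ)/2)*t) * (P * E) := by ring
  have hT3 : |(Real.pi ^ (-(n:ℝ)/2) * (2*t) ^ (-(n:ℝ)/2)) *
      (Real.exp (-a^2/s) - Real.exp (-r^2/(2*t)))|
      ≤ P * (E * (2*M*r + t*M^2 + 2*r^2)) := by
    rw [abs_mul]
    have h1 : |Real.pi ^ (-(n:ℝ)/2) * (2*t) ^ (-(n:ℝ)/2)| ≤ P := by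
      rw [abs_of_pos (by positivity)]
      calc Real.pi ^ (-(n:ℝ)/2) * (2*t) ^ (-(n:ℝ)/2) ≤ 1 * P :=
            mul_le_mul hpi1 h2tP h2tc0.le (by norm_num)
        _ = P := by ring
    apply mul_le_mul h1 hD3 (abs_nonneg _) hP0.le
  have hbracket : ((n:ℝ)*t) * (P * E) + (2*(n:ℝ)*Real.exp ((n:ℝ)/2)*t) * (P * E)
      + P * (E * (2*M*r + t*M^2 + 2*r^2))
      ≤ K1 n * (P * E * (t*M^2)) + 4 * (P * E * (M*r)) := by
    rw [K1]
    have hPE : (0:ℝ) ≤ P * E := by positivity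
    have hM2 : (1:ℝ) ≤ M^2 := by nlinarith only [hM]
    have htM2 : t ≤ t*M^2 := by nlinarith only [ht, hM2]
    have hb1 : (n:ℝ)*t ≤ (n:ℝ)*(t*M^2) :=
      mul_le_mul_of_nonneg_left htM2 (by positivity)
    have hb2 : 2*(n:ℝ)*Real.exp ((n:ℝ)/2)*t ≤ 2*(n:ℝ)*Real.exp ((n:ℝ)/2)*(t*M^2) := by
      have h9 := mul_le_mul_of_nonneg_left htM2
        (by positivity : (0:ℝ) ≤ 2*(n:ℝ)*Real.exp ((n:ℝ)/2))
      linarith only [h9]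
    have hrr : r^2 ≤ M*r := by nlinarith only [hr, hr1, hM]
    have hbr : (n:ℝ)*t + 2*(n:ℝ)*Real.exp ((n:ℝ)/2)*t + (2*M*r + t*M^2 + 2*r^2)
        ≤ ((n:ℝ) + 2*(n:ℝ)*Real.exp ((n:ℝ)/2) + 1) * (t*M^2) + 4*(M*r) := by
      nlinarith only [hb1, hb2, hrr]
    calc ((n:ℝ)*t) * (P * E) + (2*(n:ℝ)*Real.exp ((n:ℝ)/2)*t) * (P * E)
        + P * (E * (2*M*r + t*M^2 + 2*r^2))
        = (P * E) * ((n:ℝ)*t + 2*(n:ℝ)*Real.exp ((n:ℝ)/2)*t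
            + (2*M*r + t*M^2 + 2*r^2)) := by ring
      _ ≤ (P * E) * (((n:ℝ) + 2*(n:ℝ)*Real.exp ((n:ℝ)/2) + 1) * (t*M^2) + 4*(M*r)) :=
          mul_le_mul_of_nonneg_left hbr hPE
      _ = ((n:ℝ) + 2*(n:ℝ)*Real.exp ((n:ℝ)/2) + 1) * (P * E * (t*M^2))
          + 4 * (P * E * (M*r)) := by ring
  have hfin1 : P * E * (t*M^2) ≤ K3 n * (M * r ^ (1-(n:ℝ))) :=
    bound_iii n hn hr hr1 hM hMr ht htM
  have hfin2 : P * E * (M*r) ≤ K2 n * (M * r ^ (1-(n:ℝ))) :=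
    bound_ii n hn hr hr1 hM hMr ht
  have hK10 : (0:ℝ) ≤ K1 n := by
    rw [K1]; positivity
  rw [hsplitTW]
  have habs3 : ∀ X Y Z : ℝ, |X + Y + Z| ≤ |X| + |Y| + |Z| := fun X Y Z => by
    calc |X + Y + Z| ≤ |X + Y| + |Z| := abs_add_le _ _
      _ ≤ |X| + |Y| + |Z| := by linarith [abs_add_le X Y]
  refine le_trans (habs3 _ _ _) ?_
  have hmul1 : K1 n * (P * E * (t*M^2)) ≤ K1 n * (K3 n * (M * r ^ (1-(n:ℝ)))) :=
    mul_le_mul_of_nonneg_left hfin1 hK10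
  have hmul2 : (4:ℝ) * (P * E * (M*r)) ≤ 4 * (K2 n * (M * r ^ (1-(n:ℝ)))) := by linarith
  have hring : K1 n * (K3 n * (M * r ^ (1-(n:ℝ)))) + 4 * (K2 n * (M * r ^ (1-(n:ℝ))))
      = (K1 n * K3 n + 4 * K2 n) * (M * r ^ (1-(n:ℝ))) := by ring
  linarith only [hT1, hT2, hT3, hbracket, hmul1, hmul2, hring]



lemma one_le_r1n (n : ℕ) (hn : 1 ≤ n) {r : ℝ} (hr : 0 < r) (hr1 : r ≤ 1) :
    (1:ℝ) ≤ r ^ (1-(n:ℝ)) := by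
  have hn1 : (1:ℝ) ≤ (n:ℝ) := by exact_mod_cast hn
  exact Real.one_le_rpow_of_pos_of_le_one_of_nonpos hr hr1 (by linarith)

lemma W_le_P (n : ℕ) {t w : ℝ} (ht : 0 < t) :
    (2*Real.pi*t) ^ (-(n:ℝ)/2) * Real.exp (-w^2/(2*t)) ≤ t ^ (-(n:ℝ)/2) := by
  have hneg : (-(n:ℝ)/2 : ℝ) ≤ 0 := by
    have : (0:ℝ) ≤ (n:ℝ)/2 := by positivity
    linarith
  have h1 : (2*Real.pi*t) ^ (-(n:ℝ)/2) ≤ t ^ (-(n:ℝ)/2) := by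
    apply Real.rpow_le_rpow_of_nonpos ht _ hneg
    nlinarith [Real.pi_gt_three, ht]
  have h2 : Real.exp (-w^2/(2*t)) ≤ 1 := by
    apply Real.exp_le_one_iff.mpr
    have h0 : (0:ℝ) ≤ w^2/(2*t) := by positivity
    have e1 : -w^2/(2*t) = -(w^2/(2*t)) := by ring
    rw [e1]; linarith
  calc (2*Real.pi*t) ^ (-(n:ℝ)/2) * Real.exp (-w^2/(2*t))
      ≤ t ^ (-(n:ℝ)/2) * 1 :=
        mul_le_mul h1 h2 (Real.exp_pos _).le (Real.rpow_pos_of_pos ht _).le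
    _ = t ^ (-(n:ℝ)/2) := by ring

lemma T_le_sc (n : ℕ) {t a : ℝ} (ht : 0 < t) :
    Real.exp (-(n:ℝ)*t) * Real.pi ^ (-(n:ℝ)/2) * (1 - Real.exp (-2*t)) ^ (-(n:ℝ)/2) *
      Real.exp (-a^2/(1 - Real.exp (-2*t)))
    ≤ (1 - Real.exp (-2*t)) ^ (-(n:ℝ)/2) := by
  have hs0 : (0:ℝ) < 1 - Real.exp (-2*t) := by
    have : Real.exp (-2*t) < 1 := by
      apply Real.exp_lt_one_iff.mpr
      nlinarith
    linarith
  have hneg : (-(n:ℝ)/2 : ℝ) ≤ 0 := by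
    have : (0:ℝ) ≤ (n:ℝ)/2 := by positivity
    linarith
  have h1 : Real.exp (-(n:ℝ)*t) ≤ 1 := by
    apply Real.exp_le_one_iff.mpr
    have : (0:ℝ) ≤ (n:ℝ) := by positivity
    nlinarith
  have h2 : Real.pi ^ (-(n:ℝ)/2) ≤ 1 :=
    Real.rpow_le_one_of_one_le_of_nonpos (by linarith [Real.pi_gt_three]) hneg
  have h3 : Real.exp (-a^2/(1 - Real.exp (-2*t))) ≤ 1 := by
    apply Real.exp_le_one_iff.mpr
    have h0 : (0:ℝ) ≤ a^2/(1 - Real.exp (-2*t)) := by positivity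
    have e1 : -a^2/(1 - Real.exp (-2*t)) = -(a^2/(1 - Real.exp (-2*t))) := by ring
    rw [e1]; linarith
  have hsc0 : (0:ℝ) < (1 - Real.exp (-2*t)) ^ (-(n:ℝ)/2) := Real.rpow_pos_of_pos hs0 _
  calc Real.exp (-(n:ℝ)*t) * Real.pi ^ (-(n:ℝ)/2) * (1 - Real.exp (-2*t)) ^ (-(n:ℝ)/2) *
        Real.exp (-a^2/(1 - Real.exp (-2*t)))
      ≤ 1 * 1 * (1 - Real.exp (-2*t)) ^ (-(n:ℝ)/2) * 1 := by
        apply mul_le_mul _ h3 (Real.exp_pos _).le (by positivity)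
        apply mul_le_mul _ le_rfl hsc0.le (by norm_num)
        apply mul_le_mul h1 h2 (Real.rpow_pos_of_pos Real.pi_pos _).le (by norm_num)
    _ = (1 - Real.exp (-2*t)) ^ (-(n:ℝ)/2) := by ring

lemma regime2 (n : ℕ) (hn : 1 ≤ n) {r M t a : ℝ}
    (hr : 0 < r) (hr1 : r ≤ 1) (hM : 1 ≤ M) (hMr : M*r ≤ 2)
    (ht : 0 < t) (ht4 : t ≤ 1/4) (htM : 1 ≤ t*M^2) :
    |Real.exp (-(n:ℝ)*t) * Real.pi ^ (-(n:ℝ)/2) * (1 - Real.exp (-2*t)) ^ (-(n:ℝ)/2) *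
        Real.exp (-a^2/(1 - Real.exp (-2*t))) -
      (2*Real.pi*t) ^ (-(n:ℝ)/2) * Real.exp (-r^2/(2*t))|
    ≤ (2*2^n) * (M * r ^ (1-(n:ℝ))) := by
  have hM0 : (0:ℝ) < M := by linarith
  have hneg : (-(n:ℝ)/2 : ℝ) ≤ 0 := by
    have : (0:ℝ) ≤ (n:ℝ)/2 := by positivity
    linarith
  have hs2 : 2*t - 4*t^2 ≤ 1 - Real.exp (-2*t) := by
    have h := exp_neg_le_quad (by linarith : (0:ℝ) ≤ 2*t)
    have he2 : (-2*t : ℝ) = -(2*t) := by ring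
    rw [he2]; nlinarith
  have hst : t ≤ 1 - Real.exp (-2*t) := by nlinarith
  have hP : (1 - Real.exp (-2*t)) ^ (-(n:ℝ)/2) ≤ t ^ (-(n:ℝ)/2) :=
    Real.rpow_le_rpow_of_nonpos ht hst hneg
  have hT : Real.exp (-(n:ℝ)*t) * Real.pi ^ (-(n:ℝ)/2) * (1 - Real.exp (-2*t)) ^ (-(n:ℝ)/2) *
      Real.exp (-a^2/(1 - Real.exp (-2*t))) ≤ t ^ (-(n:ℝ)/2) :=
    le_trans (T_le_sc n ht) hP
  have hW := W_le_P n (w := r) ht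
  have hti : (M^2)⁻¹ ≤ t := by
    rw [inv_eq_one_div, div_le_iff₀ (by positivity)]
    linarith
  have hPM : t ^ (-(n:ℝ)/2) ≤ M ^ ((n:ℝ)) := by
    have h1 : t ^ (-(n:ℝ)/2) ≤ ((M^2)⁻¹ : ℝ) ^ (-(n:ℝ)/2) :=
      Real.rpow_le_rpow_of_nonpos (by positivity) hti hneg
    have h2 : ((M^2)⁻¹ : ℝ) ^ (-(n:ℝ)/2) = M ^ ((n:ℝ)) := by
      rw [← Real.rpow_neg_one (M^2), ← Real.rpow_mul (by positivity : (0:ℝ) ≤ M^2)]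
      rw [show (-1 : ℝ) * (-(n:ℝ)/2) = (n:ℝ)/2 by ring]
      exact sq_rpow_half n hM0.le
    rw [← h2]; exact h1
  have hMn : M ^ ((n:ℝ)) ≤ 2 ^ n * (M * r ^ (1-(n:ℝ))) := Mn_le n hn hr hM hMr
  have hT0 : (0:ℝ) ≤ Real.exp (-(n:ℝ)*t) * Real.pi ^ (-(n:ℝ)/2) *
      (1 - Real.exp (-2*t)) ^ (-(n:ℝ)/2) * Real.exp (-a^2/(1 - Real.exp (-2*t))) := by
    have hs0 : (0:ℝ) < 1 - Real.exp (-2*t) := lt_of_lt_of_le ht hst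
    positivity
  have hW0 : (0:ℝ) ≤ (2*Real.pi*t) ^ (-(n:ℝ)/2) * Real.exp (-r^2/(2*t)) := by positivity
  rw [abs_sub_le_iff]
  constructor <;> nlinarith [hT, hW, hPM, hMn, hT0, hW0]

lemma regime1 (n : ℕ) (hn : 1 ≤ n) {r M t a : ℝ}
    (hr : 0 < r) (hr1 : r ≤ 1) (hM : 1 ≤ M) (ht4 : (1:ℝ)/4 < t) :
    |Real.exp (-(n:ℝ)*t) * Real.pi ^ (-(n:ℝ)/2) * (1 - Real.exp (-2*t)) ^ (-(n:ℝ)/2) *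
        Real.exp (-a^2/(1 - Real.exp (-2*t))) -
      (2*Real.pi*t) ^ (-(n:ℝ)/2) * Real.exp (-r^2/(2*t))|
    ≤ ((3:ℝ) ^ ((n:ℝ)/2) + 1) * (M * r ^ (1-(n:ℝ))) := by
  have ht : (0:ℝ) < t := by linarith
  have hneg : (-(n:ℝ)/2 : ℝ) ≤ 0 := by
    have : (0:ℝ) ≤ (n:ℝ)/2 := by positivity
    linarith
  have hs13 : (1:ℝ)/3 ≤ 1 - Real.exp (-2*t) := by
    have h1 : Real.exp (-2*t) ≤ Real.exp (-(1:ℝ)/2) := by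
      apply Real.exp_le_exp.mpr; linarith
    have h2 : Real.exp (-(1:ℝ)/2) ≤ 2/3 := by
      have h3 := Real.add_one_le_exp ((1:ℝ)/2)
      have h4 : Real.exp (-(1:ℝ)/2) * Real.exp ((1:ℝ)/2) = 1 := by
        rw [← Real.exp_add]; norm_num
      nlinarith [Real.exp_pos (-(1:ℝ)/2)]
    linarith
  have hsc : (1 - Real.exp (-2*t)) ^ (-(n:ℝ)/2) ≤ ((1:ℝ)/3) ^ (-(n:ℝ)/2) :=
    Real.rpow_le_rpow_of_nonpos (by norm_num) hs13 hneg
  have h13 : ((1:ℝ)/3) ^ (-(n:ℝ)/2) = (3:ℝ) ^ ((n:ℝ)/2) := by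
    rw [show ((1:ℝ)/3) = (3:ℝ)⁻¹ by norm_num, Real.inv_rpow (by norm_num),
      ← Real.rpow_neg (by norm_num)]
    congr 1
    ring
  have hT : Real.exp (-(n:ℝ)*t) * Real.pi ^ (-(n:ℝ)/2) * (1 - Real.exp (-2*t)) ^ (-(n:ℝ)/2) *
      Real.exp (-a^2/(1 - Real.exp (-2*t))) ≤ (3:ℝ) ^ ((n:ℝ)/2) := by
    rw [← h13]
    exact le_trans (T_le_sc n ht) hsc
  have hW : (2*Real.pi*t) ^ (-(n:ℝ)/2) * Real.exp (-r^2/(2*t)) ≤ 1 := by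
    have h1 : (2*Real.pi*t) ^ (-(n:ℝ)/2) ≤ 1 := by
      apply Real.rpow_le_one_of_one_le_of_nonpos _ hneg
      nlinarith [Real.pi_gt_three]
    have h2 : Real.exp (-r^2/(2*t)) ≤ 1 := by
      apply Real.exp_le_one_iff.mpr
      have h0 : (0:ℝ) ≤ r^2/(2*t) := by positivity
      have e1 : -r^2/(2*t) = -(r^2/(2*t)) := by ring
      rw [e1]; linarith
    calc (2*Real.pi*t) ^ (-(n:ℝ)/2) * Real.exp (-r^2/(2*t)) ≤ 1 * 1 :=
          mul_le_mul h1 h2 (Real.exp_pos _).le (by norm_num)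
      _ = 1 := by ring
  have hr1n : (1:ℝ) ≤ r ^ (1-(n:ℝ)) := one_le_r1n n hn hr hr1
  have hMrge : (1:ℝ) ≤ M * r ^ (1-(n:ℝ)) := by nlinarith
  have hT0 : (0:ℝ) ≤ Real.exp (-(n:ℝ)*t) * Real.pi ^ (-(n:ℝ)/2) *
      (1 - Real.exp (-2*t)) ^ (-(n:ℝ)/2) * Real.exp (-a^2/(1 - Real.exp (-2*t))) := by
    have hs0 : (0:ℝ) < 1 - Real.exp (-2*t) := by linarith
    positivity
  have hW0 : (0:ℝ) ≤ (2*Real.pi*t) ^ (-(n:ℝ)/2) * Real.exp (-r^2/(2*t)) := by positivity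
  have h3n : (1:ℝ) ≤ (3:ℝ) ^ ((n:ℝ)/2) := Real.one_le_rpow (by norm_num) (by positivity)
  rw [abs_sub_le_iff]
  constructor <;> nlinarith [hT, hW, hT0, hW0]


end Stmt7Aux

open Stmt7Aux in
set_option maxHeartbeats 1000000 in
/-- There exists `C > 0` such that for all `(x,y) ∈ N` with `x ≠ y`,
`sup_{t>0} |T_t^𝒜(x,y) - W_t(x-y)| ≤ C (1+|x|)/|x-y|^{n-1}`. -/
theorem stmt7 (n : ℕ) (hn : 1 ≤ n) :
    ∃ C : ℝ, 0 < C ∧ ∀ x y : EuclideanSpace ℝ (Fin n), (x, y) ∈ localN n → x ≠ y →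
      ∀ t : ℝ, 0 < t →
      |heatKerA n t x y - heatKerW n t (x - y)|
        ≤ C * (1 + ‖x‖) / ‖x - y‖ ^ ((n : ℝ) - 1) := by
  refine ⟨((3:ℝ) ^ ((n:ℝ)/2) + 1) + 2*2^n + (K1 n * K3 n + 4 * K2 n), ?_, ?_⟩
  · have h1 : (0:ℝ) < (3:ℝ) ^ ((n:ℝ)/2) + 1 := by positivity
    have h2 : (0:ℝ) < 2*(2:ℝ)^n := by positivity
    have h3 : (0:ℝ) < K1 n * K3 n + 4 * K2 n := by
      rw [K1, K2, K3]
      positivity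
    linarith
  intro x y hmem hne t ht
  set r : ℝ := ‖x - y‖ with hr_def
  set M : ℝ := 1 + ‖x‖ with hM_def
  set a : ℝ := ‖x - Real.exp (-t) • y‖ with ha_def
  have hr : 0 < r := by
    rw [hr_def]
    exact norm_sub_pos_iff.mpr hne
  have hr1 : r ≤ 1 := hmem.1
  have hxr : r * ‖x‖ ≤ 1 := hmem.2
  have hM : 1 ≤ M := by
    rw [hM_def]
    have := norm_nonneg x
    linarith
  have hM0 : (0:ℝ) < M := by linarith
  have hMr : M * r ≤ 2 := by
    rw [hM_def]
    have := norm_nonneg x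
    nlinarith
  have hy : ‖y‖ ≤ M := by
    have h1 : ‖y‖ - ‖x‖ ≤ ‖y - x‖ := norm_sub_norm_le y x
    have h2 : ‖y - x‖ = r := by rw [hr_def, norm_sub_rev]
    rw [hM_def]
    linarith
  have ha0 : 0 ≤ a := norm_nonneg _
  have hmu0 : 0 ≤ 1 - Real.exp (-t) := by
    have : Real.exp (-t) ≤ 1 := Real.exp_le_one_iff.mpr (by linarith)
    linarith
  have hmut : 1 - Real.exp (-t) ≤ t := one_sub_exp_neg_le t
  have hmuy : ‖(1 - Real.exp (-t)) • y‖ ≤ t * M := by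
    rw [norm_smul, Real.norm_eq_abs, abs_of_nonneg hmu0]
    have := norm_nonneg y
    apply mul_le_mul hmut hy this ht.le
  have hid : x - Real.exp (-t) • y = (x - y) + (1 - Real.exp (-t)) • y := by
    rw [sub_smul, one_smul]
    abel
  have ha1 : a ≤ r + t*M := by
    rw [ha_def, hid]
    calc ‖(x - y) + (1 - Real.exp (-t)) • y‖ ≤ ‖x - y‖ + ‖(1 - Real.exp (-t)) • y‖ :=
          norm_add_le _ _
      _ ≤ r + t*M := by rw [← hr_def]; linarith
  have ha2 : r - t*M ≤ a := by
    have hid2 : x - y = (x - Real.exp (-t) • y) - (1 - Real.exp (-t)) • y := by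
      rw [sub_smul, one_smul]
      abel
    have : r ≤ a + t*M := by
      rw [hr_def, hid2]
      calc ‖(x - Real.exp (-t) • y) - (1 - Real.exp (-t)) • y‖
          ≤ ‖x - Real.exp (-t) • y‖ + ‖(1 - Real.exp (-t)) • y‖ := norm_sub_le _ _
        _ ≤ a + t*M := by rw [← ha_def]; linarith
    linarith
  have hrw : (((3:ℝ) ^ ((n:ℝ)/2) + 1) + 2*2^n + (K1 n * K3 n + 4 * K2 n)) * (1 + ‖x‖) /
      ‖x - y‖ ^ ((n:ℝ) - 1)
      = (((3:ℝ) ^ ((n:ℝ)/2) + 1) + 2*2^n + (K1 n * K3 n + 4 * K2 n)) *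
        (M * r ^ (1-(n:ℝ))) := by
    rw [show (1-(n:ℝ)) = -((n:ℝ)-1) from by ring, Real.rpow_neg hr.le, ← hM_def, ← hr_def]
    field_simp
  have hgoal : |heatKerA n t x y - heatKerW n t (x - y)|
      = |Real.exp (-(n:ℝ)*t) * Real.pi ^ (-(n:ℝ)/2) * (1 - Real.exp (-2*t)) ^ (-(n:ℝ)/2) *
          Real.exp (-a^2/(1 - Real.exp (-2*t))) -
        (2*Real.pi*t) ^ (-(n:ℝ)/2) * Real.exp (-r^2/(2*t))| := by
    rw [heatKerA, heatKerW, ha_def, hr_def]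
  rw [hrw, hgoal]
  have hC1 : (0:ℝ) < (3:ℝ) ^ ((n:ℝ)/2) + 1 := by positivity
  have hC2 : (0:ℝ) < 2*(2:ℝ)^n := by positivity
  have hC3 : (0:ℝ) < K1 n * K3 n + 4 * K2 n := by
    rw [K1, K2, K3]; positivity
  have hX : (0:ℝ) < M * r ^ (1-(n:ℝ)) := by positivity
  rcases le_or_gt t (1/4) with h4 | h4
  · rcases le_or_gt (t*M^2) 1 with hM2 | hM2
    · refine le_trans (core n hn hr hr1 hM hMr ht h4 hM2 ha0 ha1 ha2) ?_
      nlinarith [mul_pos hC1 hX, mul_pos hC2 hX, mul_pos hC3 hX]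
    · refine le_trans (regime2 n hn hr hr1 hM hMr ht h4 hM2.le) ?_
      nlinarith [mul_pos hC1 hX, mul_pos hC2 hX, mul_pos hC3 hX]
  · refine le_trans (regime1 n hn hr hr1 hM h4) ?_
    nlinarith [mul_pos hC1 hX, mul_pos hC2 hX, mul_pos hC3 hX]
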